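/- Let i ≥ 0, k ∈ ℤ and l < 0. Then the set product (I·η^{(2)}_{i,0}·I)·(I·η^{(1)}_{k,l}·I) is disjoint from C_l, where C_l = ⋃_{m∈ℤ} ( I·η^{(1)}_{m,l}·I ∪ I·η^{(2)}_{m,l}·I ). (This is the set-theoretic content of the vanishing χ^{(2)}_{i,0} * χ^{(1)}_{k,l} = 0.) -/

import Mathlib

noncomputable section

/-- The 2-dimensional local field `F = 𝔽_q((t1))((t2))` (iterated Laurent series). -/
abbrev F2 (Fq : Type) [Field Fq] : Type := LaurentSeries (LaurentSeries Fq)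

variable (Fq : Type) [Field Fq] [Fintype Fq]

/-- The local parameter `t1`. -/
def t1 : F2 Fq := HahnSeries.single 0 (HahnSeries.single 1 1)

/-- The local parameter `t2`. -/
def t2 : F2 Fq := HahnSeries.single 1 1

/-- The rank-two valuation `v(x) = (v1 x, v2 x)` of a nonzero `x` (junk value at `0`):
`v2 x` is the `t2`-adic order of `x`, and `v1 x` is the `t1`-adic order of the leading
`t2`-coefficient of `x`. -/
def vv (x : F2 Fq) : ℤ × ℤ := ((x.coeff x.order).order, x.order)

/-- The lexicographic-from-the-right (non-strict) order on `ℤ²`. -/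
def lexle (a b : ℤ × ℤ) : Prop := a.2 < b.2 ∨ (a.2 = b.2 ∧ a.1 ≤ b.1)

/-- The lexicographic-from-the-right strict order on `ℤ²`. -/
def lexlt (a b : ℤ × ℤ) : Prop := a.2 < b.2 ∨ (a.2 = b.2 ∧ a.1 < b.1)

/-- `v(x) ≤ v(y)`, with the convention `v(0) = ∞`. -/
def vle (x y : F2 Fq) : Prop := x ≠ 0 ∧ (y = 0 ∨ lexle (vv Fq x) (vv Fq y))

/-- `v(x) < v(y)`, with the convention `v(0) = ∞`. -/
def vlt (x y : F2 Fq) : Prop := x ≠ 0 ∧ (y = 0 ∨ lexlt (vv Fq x) (vv Fq y))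

/-- The rank-two valuation ring `O` of `F`. -/
def Oring : Set (F2 Fq) := {x | x = 0 ∨ lexle (0, 0) (vv Fq x)}

/-- `SL₂(F)` as the set of 2×2 matrices of determinant 1. -/
def SL2 : Set (Matrix (Fin 2) (Fin 2) (F2 Fq)) := {g | g.det = 1}

/-- The (double) Iwahori subgroup `I ⊆ SL₂(O)`: entries in `O`, lower-left entry in `t1·O`. -/
def Iwahori : Set (Matrix (Fin 2) (Fin 2) (F2 Fq)) :=
  {g | g.det = 1 ∧ (∀ i j, g i j ∈ Oring Fq) ∧ ∃ y ∈ Oring Fq, g 1 0 = t1 Fq * y}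

/-- The matrix `η^{(1)}_{i,j} = diag(t1^i t2^j, t1^{-i} t2^{-j})`. -/
def eta1 (i j : ℤ) : Matrix (Fin 2) (Fin 2) (F2 Fq) :=
  !![t1 Fq ^ i * t2 Fq ^ j, 0; 0, t1 Fq ^ (-i) * t2 Fq ^ (-j)]

/-- The matrix `η^{(2)}_{i,j} = (0, t1^i t2^j; -t1^{-i} t2^{-j}, 0)`. -/
def eta2 (i j : ℤ) : Matrix (Fin 2) (Fin 2) (F2 Fq) :=
  !![0, t1 Fq ^ i * t2 Fq ^ j; -(t1 Fq ^ (-i) * t2 Fq ^ (-j)), 0]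

/-- The double coset `I·η·I`. -/
def doubleCoset (η : Matrix (Fin 2) (Fin 2) (F2 Fq)) : Set (Matrix (Fin 2) (Fin 2) (F2 Fq)) :=
  {x | ∃ g ∈ Iwahori Fq, ∃ h ∈ Iwahori Fq, x = g * η * h}

/-- The right coset `I·z`. -/
def rcoset (z : Matrix (Fin 2) (Fin 2) (F2 Fq)) : Set (Matrix (Fin 2) (Fin 2) (F2 Fq)) :=
  {x | ∃ g ∈ Iwahori Fq, x = g * z}
set_option linter.unusedSectionVars false

-- generic one-level lemmas
open HahnSeries in
theorem hs_add_lt {K : Type} [Field K] {x y : HahnSeries ℤ K} (hx : x ≠ 0)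
    (hy : y = 0 ∨ x.order < y.order) :
    x + y ≠ 0 ∧ (x + y).order = x.order ∧ (x + y).coeff x.order = x.coeff x.order := by
  rcases hy with hy | hy
  · subst hy; simpa using hx
  · have hyc : y.coeff x.order = 0 := coeff_eq_zero_of_lt_order hy
    have hc : (x + y).coeff x.order = x.coeff x.order := by rw [coeff_add, hyc, add_zero]
    have hcn : (x + y).coeff x.order ≠ 0 := by rw [hc]; exact mt coeff_order_eq_zero.mp hx
    have hne : x + y ≠ 0 := fun h => hcn (by simp [h])
    refine ⟨hne, le_antisymm (order_le_of_coeff_ne_zero hcn) ?_, hc⟩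
    have := min_order_le_order_add hne
    omega

open HahnSeries in
theorem hs_add_ge {K : Type} [Field K] {x y : HahnSeries ℤ K} (hxy : x + y ≠ 0) :
    x.order ≤ (x + y).order ∨ y.order ≤ (x + y).order := by
  have hcn := mt coeff_order_eq_zero.mp hxy
  rw [coeff_add] at hcn
  rcases (show x.coeff (x+y).order ≠ 0 ∨ y.coeff (x+y).order ≠ 0 by
    by_contra h; push_neg at h; rw [h.1, h.2, add_zero] at hcn; exact hcn rfl) with h | h
  · exact Or.inl (order_le_of_coeff_ne_zero h)
  · exact Or.inr (order_le_of_coeff_ne_zero h)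

-- rank-2 valuation predicates
def Vge (c : ℤ × ℤ) (x : F2 Fq) : Prop := x = 0 ∨ lexle c (vv Fq x)
def Vgt (c : ℤ × ℤ) (x : F2 Fq) : Prop := x = 0 ∨ lexlt c (vv Fq x)
def Veq (c : ℤ × ℤ) (x : F2 Fq) : Prop := x ≠ 0 ∧ vv Fq x = c

variable {Fq}

theorem veq_vge {c x} (h : Veq Fq c x) : Vge Fq c x := by
  obtain ⟨h1, h2⟩ := h; exact Or.inr (by simp [lexle, h2])

theorem vgt_vge {c x} (h : Vgt Fq c x) : Vge Fq c x := by
  rcases h with h | h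
  · exact Or.inl h
  · exact Or.inr (by simp only [lexle, lexlt] at *; omega)

theorem vge_mono {c d x} (h : Vge Fq c x) (hdc : lexle d c) : Vge Fq d x := by
  rcases h with h | h
  · exact Or.inl h
  · exact Or.inr (by simp only [lexle] at *; omega)

theorem vgt_mono {c d x} (h : Vgt Fq c x) (hdc : lexle d c) : Vgt Fq d x := by
  rcases h with h | h
  · exact Or.inl h
  · exact Or.inr (by simp only [lexle, lexlt] at *; omega)

theorem vgt_of_vge {c d x} (h : Vge Fq c x) (hdc : lexlt d c) : Vgt Fq d x := by
  rcases h with h | h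
  · exact Or.inl h
  · exact Or.inr (by simp only [lexle, lexlt] at *; omega)

theorem veq_cast {c d x} (h : Veq Fq c x) (hcd : c = d) : Veq Fq d x := hcd ▸ h

-- additive lemmas
theorem veq_add_vgt {c x y} (hx : Veq Fq c x) (hy : Vgt Fq c y) : Veq Fq c (x + y) := by
  obtain ⟨hx0, hvx⟩ := hx
  by_cases hy0 : y = 0
  · subst hy0; rw [add_zero]; exact ⟨hx0, hvx⟩
  rcases hy with h | h; · exact absurd h hy0
  subst hvx
  simp only [lexlt, vv] at h ⊢
  rcases h with h2 | ⟨h2, h1⟩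
  · obtain ⟨hne, ho, hc⟩ := hs_add_lt hx0 (Or.inr h2)
    exact ⟨hne, by simp [vv, ho, hc]⟩
  · -- same order, leading coeff of y has bigger order
    set a := x.coeff x.order with ha
    set b := y.coeff x.order with hb
    have hb' : b = y.coeff y.order := by rw [hb, h2]
    have ha0 : a ≠ 0 := mt HahnSeries.coeff_order_eq_zero.mp hx0
    have hb0 : b ≠ 0 := by rw [hb']; exact mt HahnSeries.coeff_order_eq_zero.mp hy0
    obtain ⟨habne, habo, -⟩ := hs_add_lt (x := a) (y := b) ha0 (Or.inr (by rw [hb']; exact h1))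
    have hc : (x + y).coeff x.order = a + b := by rw [HahnSeries.coeff_add, ha, hb]
    have hcn : (x + y).coeff x.order ≠ 0 := by rw [hc]; exact habne
    have hne : x + y ≠ 0 := fun h => hcn (by simp [h])
    have hord : (x + y).order = x.order := by
      refine le_antisymm (HahnSeries.order_le_of_coeff_ne_zero hcn) ?_
      have := HahnSeries.min_order_le_order_add hne
      omega
    refine ⟨hne, ?_⟩
    rw [vv, hord, hc, habo]

theorem vge_add {c x y} (hx : Vge Fq c x) (hy : Vge Fq c y) : Vge Fq c (x + y) := by
  by_cases hx0 : x = 0; · subst hx0; rwa [zero_add]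
  by_cases hy0 : y = 0; · subst hy0; rwa [add_zero]
  by_cases hxy : x + y = 0; · exact Or.inl hxy
  rcases hx with h | hx; · exact absurd h hx0
  rcases hy with h | hy; · exact absurd h hy0
  refine Or.inr ?_
  simp only [lexle, vv] at hx hy ⊢
  rcases lt_trichotomy x.order y.order with ho | ho | ho
  · obtain ⟨-, h2, h3⟩ := hs_add_lt hx0 (Or.inr ho)
    rw [h2, h3]; omega
  · -- equal orders
    have hmin := hs_add_ge hxy
    rcases eq_or_lt_of_le (show x.order ≤ (x+y).order by omega) with he | hlt
    · have hcn : (x + y).coeff x.order ≠ 0 := by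
        rw [he]; exact mt HahnSeries.coeff_order_eq_zero.mp hxy
      have hc : (x + y).coeff x.order = x.coeff x.order + y.coeff y.order := by
        rw [HahnSeries.coeff_add, ho]
      have h3 := hs_add_ge (x := x.coeff x.order) (y := y.coeff y.order) (by rw [← hc]; exact hcn)
      rw [← he, hc]
      omega
    · omega
  · obtain ⟨-, h2, h3⟩ := hs_add_lt hy0 (Or.inr ho)
    rw [add_comm] at hxy ⊢
    rw [h2, h3]; omega

theorem vgt_add {c x y} (hx : Vgt Fq c x) (hy : Vgt Fq c y) : Vgt Fq c (x + y) := by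
  by_cases hx0 : x = 0; · subst hx0; rwa [zero_add]
  by_cases hy0 : y = 0; · subst hy0; rwa [add_zero]
  by_cases hxy : x + y = 0; · exact Or.inl hxy
  rcases hx with h | hx; · exact absurd h hx0
  rcases hy with h | hy; · exact absurd h hy0
  refine Or.inr ?_
  simp only [lexlt, vv] at hx hy ⊢
  rcases lt_trichotomy x.order y.order with ho | ho | ho
  · obtain ⟨-, h2, h3⟩ := hs_add_lt hx0 (Or.inr ho)
    rw [h2, h3]; omega
  · have hmin := hs_add_ge hxy
    rcases eq_or_lt_of_le (show x.order ≤ (x+y).order by omega) with he | hlt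
    · have hcn : (x + y).coeff x.order ≠ 0 := by
        rw [he]; exact mt HahnSeries.coeff_order_eq_zero.mp hxy
      have hc : (x + y).coeff x.order = x.coeff x.order + y.coeff y.order := by
        rw [HahnSeries.coeff_add, ho]
      have h3 := hs_add_ge (x := x.coeff x.order) (y := y.coeff y.order) (by rw [← hc]; exact hcn)
      rw [← he, hc]
      omega
    · omega
  · obtain ⟨-, h2, h3⟩ := hs_add_lt hy0 (Or.inr ho)
    rw [add_comm] at hxy ⊢
    rw [h2, h3]; omega

-- multiplicative lemmas
theorem vv_mul {x y : F2 Fq} (hx : x ≠ 0) (hy : y ≠ 0) :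
    x * y ≠ 0 ∧ vv Fq (x * y) = vv Fq x + vv Fq y := by
  have hne : x * y ≠ 0 := mul_ne_zero hx hy
  have ho : (x * y).order = x.order + y.order := HahnSeries.order_mul hx hy
  have hlx : x.leadingCoeff = x.coeff x.order := by
    exact HahnSeries.leadingCoeff_eq
  have hly : y.leadingCoeff = y.coeff y.order := by
    exact HahnSeries.leadingCoeff_eq
  have hc : (x * y).coeff (x.order + y.order) = x.coeff x.order * y.coeff y.order := by
    rw [HahnSeries.coeff_mul_order_add_order, hlx, hly]
  have hx' : x.coeff x.order ≠ 0 := mt HahnSeries.coeff_order_eq_zero.mp hx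
  have hy' : y.coeff y.order ≠ 0 := mt HahnSeries.coeff_order_eq_zero.mp hy
  refine ⟨hne, ?_⟩
  rw [vv, vv, vv, ho, hc, HahnSeries.order_mul hx' hy', Prod.mk_add_mk]

theorem veq_mul {c d : ℤ × ℤ} {x y : F2 Fq} (hx : Veq Fq c x) (hy : Veq Fq d y) :
    Veq Fq (c + d) (x * y) := by
  obtain ⟨hx0, hvx⟩ := hx; obtain ⟨hy0, hvy⟩ := hy
  obtain ⟨hne, hv⟩ := vv_mul hx0 hy0
  exact ⟨hne, by rw [hv, hvx, hvy]⟩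

theorem vge_mul {c d : ℤ × ℤ} {x y : F2 Fq} (hx : Vge Fq c x) (hy : Vge Fq d y) :
    Vge Fq (c + d) (x * y) := by
  by_cases hx0 : x = 0; · exact Or.inl (by rw [hx0]; exact zero_mul y)
  by_cases hy0 : y = 0; · exact Or.inl (by rw [hy0]; exact mul_zero x)
  rcases hx with h | hx; · exact absurd h hx0
  rcases hy with h | hy; · exact absurd h hy0
  obtain ⟨hne, hv⟩ := vv_mul hx0 hy0
  refine Or.inr ?_
  rw [hv]
  simp only [lexle, Prod.fst_add, Prod.snd_add] at *
  omega

theorem vgt_mul_vge {c d : ℤ × ℤ} {x y : F2 Fq} (hx : Vgt Fq c x) (hy : Vge Fq d y) :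
    Vgt Fq (c + d) (x * y) := by
  by_cases hx0 : x = 0; · exact Or.inl (by rw [hx0]; exact zero_mul y)
  by_cases hy0 : y = 0; · exact Or.inl (by rw [hy0]; exact mul_zero x)
  rcases hx with h | hx; · exact absurd h hx0
  rcases hy with h | hy; · exact absurd h hy0
  obtain ⟨hne, hv⟩ := vv_mul hx0 hy0
  refine Or.inr ?_
  rw [hv]
  simp only [lexle, lexlt, Prod.fst_add, Prod.snd_add] at *
  omega

theorem vge_mul_vgt {c d : ℤ × ℤ} {x y : F2 Fq} (hx : Vge Fq c x) (hy : Vgt Fq d y) :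
    Vgt Fq (c + d) (x * y) := by
  by_cases hx0 : x = 0; · exact Or.inl (by rw [hx0]; exact zero_mul y)
  by_cases hy0 : y = 0; · exact Or.inl (by rw [hy0]; exact mul_zero x)
  rcases hx with h | hx; · exact absurd h hx0
  rcases hy with h | hy; · exact absurd h hy0
  obtain ⟨hne, hv⟩ := vv_mul hx0 hy0
  refine Or.inr ?_
  rw [hv]
  simp only [lexle, lexlt, Prod.fst_add, Prod.snd_add] at *
  omega

-- negation
theorem veq_neg {c : ℤ × ℤ} {x : F2 Fq} (h : Veq Fq c x) : Veq Fq c (-x) := by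
  obtain ⟨h0, hv⟩ := h
  refine ⟨fun hn => h0 (neg_eq_zero.mp hn), ?_⟩
  rw [← hv, vv, vv, HahnSeries.order_neg, HahnSeries.coeff_neg, HahnSeries.order_neg]

theorem vge_neg {c : ℤ × ℤ} {x : F2 Fq} (h : Vge Fq c x) : Vge Fq c (-x) := by
  rcases h with h | h
  · exact Or.inl (neg_eq_zero.mpr h)
  · refine Or.inr ?_
    rwa [vv, HahnSeries.order_neg, HahnSeries.coeff_neg, HahnSeries.order_neg]

theorem vgt_neg {c : ℤ × ℤ} {x : F2 Fq} (h : Vgt Fq c x) : Vgt Fq c (-x) := by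
  rcases h with h | h
  · exact Or.inl (neg_eq_zero.mpr h)
  · refine Or.inr ?_
    rwa [vv, HahnSeries.order_neg, HahnSeries.coeff_neg, HahnSeries.order_neg]

-- powers
theorem single_one_zpow {K : Type} [Field K] (n : ℤ) :
    (HahnSeries.single (1 : ℤ) (1 : K)) ^ n = HahnSeries.single n 1 := by
  have hmul : ∀ a b : ℤ, (HahnSeries.single a (1 : K)) * HahnSeries.single b 1
      = HahnSeries.single (a + b) 1 := by
    intro a b; rw [HahnSeries.single_mul_single, one_mul]
  cases n with
  | ofNat m =>
      rw [Int.ofNat_eq_coe, zpow_natCast, HahnSeries.single_pow, one_pow]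
      norm_num
  | negSucc m =>
      rw [zpow_negSucc, HahnSeries.single_pow, one_pow]
      refine inv_eq_of_mul_eq_one_right ?_
      rw [hmul]
      have h0 : ((m + 1) • (1 : ℤ) + Int.negSucc m) = 0 := by
        rw [nsmul_eq_mul, Int.negSucc_eq]; push_cast; ring
      rw [h0]
      exact HahnSeries.single_zero_one

theorem single_zero_zpow {K : Type} [Field K] {r : K} (hr : r ≠ 0) (n : ℤ) :
    (HahnSeries.single (0 : ℤ) r) ^ n = HahnSeries.single 0 (r ^ n) := by
  have hnat : ∀ k : ℕ, (HahnSeries.single (0 : ℤ) r) ^ k = HahnSeries.single 0 (r ^ k) := by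
    intro k; rw [HahnSeries.single_pow, smul_zero]
  cases n with
  | ofNat m => rw [Int.ofNat_eq_coe, zpow_natCast, zpow_natCast, hnat]
  | negSucc m =>
      rw [zpow_negSucc, zpow_negSucc, hnat]
      have hs : r ^ (m + 1) ≠ 0 := pow_ne_zero _ hr
      refine inv_eq_of_mul_eq_one_right ?_
      rw [HahnSeries.single_mul_single, add_zero, mul_inv_cancel₀ hs]
      exact HahnSeries.single_zero_one

theorem t2_zpow (n : ℤ) : (t2 Fq) ^ n = HahnSeries.single n 1 := single_one_zpow n

theorem t1_zpow (m : ℤ) :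
    (t1 Fq) ^ m = HahnSeries.single (0 : ℤ) (HahnSeries.single m (1 : Fq)) := by
  have h : (t1 Fq) ^ m
      = HahnSeries.single (0 : ℤ) ((HahnSeries.single (1:ℤ) (1 : Fq)) ^ m) :=
    single_zero_zpow (HahnSeries.single_ne_zero one_ne_zero) m
  rw [h, single_one_zpow]

theorem veq_pow (m n : ℤ) : Veq Fq (m, n) (t1 Fq ^ m * t2 Fq ^ n) := by
  rw [t1_zpow, t2_zpow, HahnSeries.single_mul_single, zero_add, mul_one]
  have h1 : (HahnSeries.single m (1 : Fq)) ≠ 0 := HahnSeries.single_ne_zero one_ne_zero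
  refine ⟨HahnSeries.single_ne_zero h1, ?_⟩
  rw [vv, HahnSeries.order_single h1, HahnSeries.coeff_single_same,
    HahnSeries.order_single one_ne_zero]

theorem veq_one : Veq Fq (0, 0) 1 := by
  have e : t1 Fq ^ (0 : ℤ) * t2 Fq ^ (0 : ℤ) = 1 := by
    have e1 : t1 Fq ^ (0 : ℤ) = 1 := zpow_zero _
    have e2 : t2 Fq ^ (0 : ℤ) = 1 := zpow_zero _
    rw [e1, e2]; exact one_mul (1 : F2 Fq)
  exact e ▸ veq_pow 0 0

theorem veq_t1 : Veq Fq (1, 0) (t1 Fq) := by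
  have e : t1 Fq ^ (1 : ℤ) * t2 Fq ^ (0 : ℤ) = t1 Fq := by
    have e1 : t1 Fq ^ (1 : ℤ) = t1 Fq := zpow_one _
    have e2 : t2 Fq ^ (0 : ℤ) = 1 := zpow_zero _
    rw [e1, e2]; exact mul_one (t1 Fq)
  exact e ▸ veq_pow 1 0

theorem vge_of_mem_Oring {x : F2 Fq} (h : x ∈ Oring Fq) : Vge Fq (0, 0) x := h

theorem vgt_t1_mul {y : F2 Fq} (hy : Vge Fq (0, 0) y) : Vgt Fq (0, 0) (t1 Fq * y) := by
  have ht : Vgt Fq (0, 0) (t1 Fq) :=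
    vgt_of_vge (veq_vge veq_t1) (by simp [lexlt])
  simpa using vgt_mul_vge ht hy

theorem iwahori_facts {g : Matrix (Fin 2) (Fin 2) (F2 Fq)} (hg : g ∈ Iwahori Fq) :
    Veq Fq (0, 0) (g 0 0) ∧ Veq Fq (0, 0) (g 1 1) ∧ Vge Fq (0, 0) (g 0 1)
      ∧ Vgt Fq (0, 0) (g 1 0) := by
  obtain ⟨hdet, hO, y, hy, h10⟩ := hg
  have h01 : Vge Fq (0, 0) (g 0 1) := hO 0 1
  have h00 : Vge Fq (0, 0) (g 0 0) := hO 0 0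
  have h11 : Vge Fq (0, 0) (g 1 1) := hO 1 1
  have hgt : Vgt Fq (0, 0) (g 1 0) := by rw [h10]; exact vgt_t1_mul hy
  have hdet2 : g 0 0 * g 1 1 - g 0 1 * g 1 0 = 1 := by
    have hdf := Matrix.det_fin_two g
    rw [hdet] at hdf
    exact hdf.symm
  have he : g 0 0 * g 1 1 = 1 + g 0 1 * g 1 0 := by rw [← hdet2]; ring
  have hprod : Veq Fq (0, 0) (g 0 0 * g 1 1) := by
    rw [he]
    have h1 : Vgt Fq (0, 0) (g 0 1 * g 1 0) := by simpa using vge_mul_vgt h01 hgt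
    exact veq_add_vgt veq_one h1
  obtain ⟨hne, hv⟩ := hprod
  have h00n : g 0 0 ≠ 0 := fun h => hne (by rw [h]; exact zero_mul (g 1 1))
  have h11n : g 1 1 ≠ 0 := fun h => hne (by rw [h]; exact mul_zero (g 0 0))
  obtain ⟨-, hvmul⟩ := vv_mul h00n h11n
  rw [hvmul] at hv
  rcases h00 with h | h00; · exact absurd h h00n
  rcases h11 with h | h11; · exact absurd h h11n
  have e1 : vv Fq (g 0 0) = (0, 0) ∧ vv Fq (g 1 1) = (0, 0) := by
    rw [Prod.ext_iff] at hv ⊢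
    rw [Prod.ext_iff]
    simp only [lexle, Prod.fst_add, Prod.snd_add] at *
    omega
  exact ⟨⟨h00n, e1.1⟩, ⟨h11n, e1.2⟩, h01, hgt⟩

theorem iwahori_mul {g h : Matrix (Fin 2) (Fin 2) (F2 Fq)}
    (hg : g ∈ Iwahori Fq) (hh : h ∈ Iwahori Fq) : g * h ∈ Iwahori Fq := by
  obtain ⟨hgdet, hgO, y, hy, hg10⟩ := hg
  obtain ⟨hhdet, hhO, y', hy', hh10⟩ := hh
  refine ⟨by rw [Matrix.det_mul, hgdet, hhdet]; exact one_mul (1 : F2 Fq), ?_, ?_⟩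
  · intro i j
    have e : (g * h) i j = g i 0 * h 0 j + g i 1 * h 1 j := by
      simp [Matrix.mul_apply, Fin.sum_univ_two]
    rw [e]
    exact vge_add (by simpa using vge_mul (hgO i 0) (hhO 0 j))
      (by simpa using vge_mul (hgO i 1) (hhO 1 j))
  · refine ⟨y * h 0 0 + g 1 1 * y', ?_, ?_⟩
    · exact vge_add (by simpa using vge_mul hy (hhO 0 0))
        (by simpa using vge_mul (hgO 1 1) hy')
    · have e : (g * h) 1 0 = g 1 0 * h 0 0 + g 1 1 * h 1 0 := by
        simp [Matrix.mul_apply, Fin.sum_univ_two]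
      rw [e, hg10, hh10]; ring

theorem eta1_coset_facts {m n : ℤ} {z : Matrix (Fin 2) (Fin 2) (F2 Fq)}
    (hz : z ∈ doubleCoset Fq (eta1 Fq m n)) (hn : n < 0) :
    Veq Fq (m, n) (z 0 0) ∧ Vgt Fq (m, n) (z 1 0) := by
  obtain ⟨g, hg, h, hh, rfl⟩ := hz
  obtain ⟨hg00, hg11, hg01, hg10⟩ := iwahori_facts hg
  obtain ⟨hh00, hh11, hh01, hh10⟩ := iwahori_facts hh
  have hA : Veq Fq (m, n) (t1 Fq ^ m * t2 Fq ^ n) := veq_pow m n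
  have hB : Veq Fq (-m, -n) (t1 Fq ^ (-m) * t2 Fq ^ (-n)) := veq_pow (-m) (-n)
  have e00 : (g * eta1 Fq m n * h) 0 0
      = g 0 0 * (t1 Fq ^ m * t2 Fq ^ n) * h 0 0
        + g 0 1 * (t1 Fq ^ (-m) * t2 Fq ^ (-n)) * h 1 0 := by
    simp [eta1, Matrix.mul_apply, Fin.sum_univ_two]
  have e10 : (g * eta1 Fq m n * h) 1 0
      = g 1 0 * (t1 Fq ^ m * t2 Fq ^ n) * h 0 0
        + g 1 1 * (t1 Fq ^ (-m) * t2 Fq ^ (-n)) * h 1 0 := by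
    simp [eta1, Matrix.mul_apply, Fin.sum_univ_two]
  constructor
  · rw [e00]
    refine veq_add_vgt ?_ ?_
    · have := veq_mul (veq_mul hg00 hA) (hh00)
      exact veq_cast this (by rw [Prod.ext_iff]; constructor <;> simp)
    · have hgt : Vgt Fq (-m, -n) (g 0 1 * (t1 Fq ^ (-m) * t2 Fq ^ (-n)) * h 1 0) := by
        have h1 := vge_mul_vgt (vge_mul hg01 (veq_vge hB)) hh10
        exact vgt_mono h1 (by simp only [lexle, Prod.fst_add, Prod.snd_add]; omega)
      exact vgt_mono hgt (by simp only [lexle]; omega)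
  · rw [e10]
    refine vgt_add ?_ ?_
    · have h1 := vgt_mul_vge (vgt_mul_vge hg10 (veq_vge hA)) (veq_vge hh00)
      exact vgt_mono h1 (by simp only [lexle, Prod.fst_add, Prod.snd_add]; omega)
    · have h1 := vge_mul_vgt (vge_mul (veq_vge hg11) (veq_vge hB)) hh10
      exact vgt_mono h1 (by simp only [lexle, Prod.fst_add, Prod.snd_add]; omega)

theorem eta2_coset_facts {m n : ℤ} {z : Matrix (Fin 2) (Fin 2) (F2 Fq)}
    (hz : z ∈ doubleCoset Fq (eta2 Fq m n)) (hn : n < 0) :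
    Veq Fq (m, n) (z 0 1) ∧ Vgt Fq (m, n) (z 1 0) := by
  obtain ⟨g, hg, h, hh, rfl⟩ := hz
  obtain ⟨hg00, hg11, hg01, hg10⟩ := iwahori_facts hg
  obtain ⟨hh00, hh11, hh01, hh10⟩ := iwahori_facts hh
  have hA : Veq Fq (m, n) (t1 Fq ^ m * t2 Fq ^ n) := veq_pow m n
  have hB : Veq Fq (-m, -n) (-(t1 Fq ^ (-m) * t2 Fq ^ (-n))) := veq_neg (veq_pow (-m) (-n))
  have e01 : (g * eta2 Fq m n * h) 0 1
      = g 0 0 * (t1 Fq ^ m * t2 Fq ^ n) * h 1 1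
        + g 0 1 * -(t1 Fq ^ (-m) * t2 Fq ^ (-n)) * h 0 1 := by
    simp [eta2, Matrix.mul_apply, Fin.sum_univ_two]; ring
  have e10 : (g * eta2 Fq m n * h) 1 0
      = g 1 0 * (t1 Fq ^ m * t2 Fq ^ n) * h 1 0
        + g 1 1 * -(t1 Fq ^ (-m) * t2 Fq ^ (-n)) * h 0 0 := by
    simp [eta2, Matrix.mul_apply, Fin.sum_univ_two]; ring
  constructor
  · rw [e01]
    refine veq_add_vgt ?_ ?_
    · have := veq_mul (veq_mul hg00 hA) hh11
      exact veq_cast this (by rw [Prod.ext_iff]; constructor <;> simp)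
    · have h1 := vge_mul (vge_mul hg01 (veq_vge hB)) hh01
      exact vgt_of_vge h1 (by simp only [lexlt, Prod.fst_add, Prod.snd_add]; omega)
  · rw [e10]
    refine vgt_add ?_ ?_
    · have h1 := vgt_mul_vge (vgt_mul_vge hg10 (veq_vge hA)) (vgt_vge hh10)
      exact vgt_mono h1 (by simp only [lexle, Prod.fst_add, Prod.snd_add]; omega)
    · have h1 := vge_mul (vge_mul (veq_vge hg11) (veq_vge hB)) (veq_vge hh00)
      exact vgt_of_vge h1 (by simp only [lexlt, Prod.fst_add, Prod.snd_add]; omega)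

set_option maxHeartbeats 1600000 in
theorem prod_facts {i k l : ℤ} (hi : 0 ≤ i) (hl : l < 0)
    {g b d : Matrix (Fin 2) (Fin 2) (F2 Fq)}
    (hg : g ∈ Iwahori Fq) (hb : b ∈ Iwahori Fq) (hd : d ∈ Iwahori Fq) :
    Veq Fq (k - i, l) ((g * (eta2 Fq i 0 * b * eta1 Fq k l) * d) 1 0)
      ∧ Vge Fq (k - i, l) ((g * (eta2 Fq i 0 * b * eta1 Fq k l) * d) 0 0)
      ∧ Vge Fq (k - i, l) ((g * (eta2 Fq i 0 * b * eta1 Fq k l) * d) 0 1) := by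
  obtain ⟨hg00, hg11, hg01, hg10⟩ := iwahori_facts hg
  obtain ⟨hb00, hb11, hb01, hb10⟩ := iwahori_facts hb
  obtain ⟨hd00, hd11, hd01, hd10⟩ := iwahori_facts hd
  set c : ℤ × ℤ := (k - i, l) with hc
  set P : F2 Fq := t1 Fq ^ i * t2 Fq ^ (0 : ℤ) with hPdef
  set Pm : F2 Fq := t1 Fq ^ (-i) * t2 Fq ^ (-(0 : ℤ)) with hPmdef
  set A : F2 Fq := t1 Fq ^ k * t2 Fq ^ l with hAdef
  set B : F2 Fq := t1 Fq ^ (-k) * t2 Fq ^ (-l) with hBdef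
  have hP : Veq Fq (i, 0) P := veq_pow i 0
  have hPm : Veq Fq (-i, -0) Pm := veq_pow (-i) (-0)
  have hA : Veq Fq (k, l) A := veq_pow k l
  have hB : Veq Fq (-k, -l) B := veq_pow (-k) (-l)
  -- the four entries of the middle matrix
  have hN00ge : Vge Fq c (P * b 1 0 * A) := by
    have := vge_mul (vge_mul (veq_vge hP) (vgt_vge hb10)) (veq_vge hA)
    exact vge_mono this (by simp only [hc, lexle, Prod.fst_add, Prod.snd_add]; omega)
  have hN00gt : Vgt Fq c (P * b 1 0 * A) := by
    have := vgt_mul_vge (vge_mul_vgt (veq_vge hP) hb10) (veq_vge hA)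
    exact vgt_mono this (by simp only [hc, lexle, Prod.fst_add, Prod.snd_add]; omega)
  have hN01gt : Vgt Fq c (P * b 1 1 * B) := by
    have := vge_mul (vge_mul (veq_vge hP) (veq_vge hb11)) (veq_vge hB)
    exact vgt_of_vge this (by simp only [hc, lexlt, Prod.fst_add, Prod.snd_add]; omega)
  have hN10eq : Veq Fq c (-(Pm * b 0 0 * A)) := by
    have := veq_neg (veq_mul (veq_mul hPm hb00) hA)
    exact veq_cast this (by simp only [hc, Prod.mk_add_mk, Prod.ext_iff]; omega)
  have hN11gt : Vgt Fq c (-(Pm * b 0 1 * B)) := by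
    have := vge_neg (vge_mul (vge_mul (veq_vge hPm) hb01) (veq_vge hB))
    exact vgt_of_vge this (by simp only [hc, lexlt, Prod.fst_add, Prod.snd_add]; omega)
  -- sandwiching helpers
  have sand_ge : ∀ {u M v : F2 Fq}, Vge Fq (0, 0) u → Vge Fq c M → Vge Fq (0, 0) v →
      Vge Fq c (u * M * v) := by
    intro u M v hu hM hv
    exact vge_mono (vge_mul (vge_mul hu hM) hv)
      (by simp only [hc, lexle, Prod.fst_add, Prod.snd_add]; omega)
  have sand_gt : ∀ {u M v : F2 Fq}, Vge Fq (0, 0) u → Vgt Fq c M → Vge Fq (0, 0) v →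
      Vgt Fq c (u * M * v) := by
    intro u M v hu hM hv
    exact vgt_mono (vgt_mul_vge (vge_mul_vgt hu hM) hv)
      (by simp only [hc, lexle, Prod.fst_add, Prod.snd_add]; omega)
  have sand_eq : ∀ {u M v : F2 Fq}, Veq Fq (0, 0) u → Veq Fq c M → Veq Fq (0, 0) v →
      Veq Fq c (u * M * v) := by
    intro u M v hu hM hv
    exact veq_cast (veq_mul (veq_mul hu hM) hv)
      (by simp only [hc, Prod.mk_add_mk, Prod.ext_iff, Prod.fst_add, Prod.snd_add]; omega)
  -- entry expansions
  have e10 : (g * (eta2 Fq i 0 * b * eta1 Fq k l) * d) 1 0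
      = g 1 1 * -(Pm * b 0 0 * A) * d 0 0 + g 1 0 * (P * b 1 0 * A) * d 0 0
        + g 1 0 * (P * b 1 1 * B) * d 1 0 + g 1 1 * -(Pm * b 0 1 * B) * d 1 0 := by
    simp [eta1, eta2, Matrix.mul_apply, Fin.sum_univ_two, Matrix.vecMul, dotProduct, hPdef, hPmdef, hAdef, hBdef]; ring
  have e00 : (g * (eta2 Fq i 0 * b * eta1 Fq k l) * d) 0 0
      = g 0 0 * (P * b 1 0 * A) * d 0 0 + g 0 0 * (P * b 1 1 * B) * d 1 0
        + g 0 1 * -(Pm * b 0 0 * A) * d 0 0 + g 0 1 * -(Pm * b 0 1 * B) * d 1 0 := by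
    simp [eta1, eta2, Matrix.mul_apply, Fin.sum_univ_two, Matrix.vecMul, dotProduct, hPdef, hPmdef, hAdef, hBdef]; ring
  have e01 : (g * (eta2 Fq i 0 * b * eta1 Fq k l) * d) 0 1
      = g 0 0 * (P * b 1 0 * A) * d 0 1 + g 0 0 * (P * b 1 1 * B) * d 1 1
        + g 0 1 * -(Pm * b 0 0 * A) * d 0 1 + g 0 1 * -(Pm * b 0 1 * B) * d 1 1 := by
    simp [eta1, eta2, Matrix.mul_apply, Fin.sum_univ_two, Matrix.vecMul, dotProduct, hPdef, hPmdef, hAdef, hBdef]; ring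
  refine ⟨?_, ?_, ?_⟩
  · rw [e10]
    refine veq_add_vgt (veq_add_vgt (veq_add_vgt ?_ ?_) ?_) ?_
    · exact sand_eq hg11 hN10eq hd00
    · exact sand_gt (vgt_vge hg10) hN00gt (veq_vge hd00)
    · exact sand_gt (vgt_vge hg10) hN01gt (vgt_vge hd10)
    · exact sand_gt (veq_vge hg11) hN11gt (vgt_vge hd10)
  · rw [e00]
    exact vge_add (vge_add (vge_add
      (sand_ge (veq_vge hg00) hN00ge (veq_vge hd00))
      (sand_ge (veq_vge hg00) (vgt_vge hN01gt) (vgt_vge hd10)))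
      (sand_ge hg01 (veq_vge hN10eq) (veq_vge hd00)))
      (sand_ge hg01 (vgt_vge hN11gt) (vgt_vge hd10))
  · rw [e01]
    exact vge_add (vge_add (vge_add
      (sand_ge (veq_vge hg00) hN00ge hd01)
      (sand_ge (veq_vge hg00) (vgt_vge hN01gt) (veq_vge hd11)))
      (sand_ge hg01 (veq_vge hN10eq) hd01))
      (sand_ge hg01 (vgt_vge hN11gt) (veq_vge hd11))


variable (Fq)

open Pointwise in
/-- For `i ≥ 0` and `l < 0`, the product `(I·η^{(2)}_{i,0}·I)·(I·η^{(1)}_{k,l}·I)` is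
disjoint from `C_l = ⋃_m (I·η^{(1)}_{m,l}·I ∪ I·η^{(2)}_{m,l}·I)`
(the set-theoretic content of `χ^{(2)}_{i,0} * χ^{(1)}_{k,l} = 0`). -/
theorem product_vanishing (Fq : Type) [Field Fq] [Fintype Fq] (i k l : ℤ)
    (hi : 0 ≤ i) (hl : l < 0) :
    (doubleCoset Fq (eta2 Fq i 0) * doubleCoset Fq (eta1 Fq k l)) ∩
      (⋃ m : ℤ, doubleCoset Fq (eta1 Fq m l) ∪ doubleCoset Fq (eta2 Fq m l)) = ∅ := by
  rw [Set.eq_empty_iff_forall_notMem]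
  rintro x ⟨hP, hC⟩
  rw [Set.mem_mul] at hP
  obtain ⟨p, hp, q, hq, rfl⟩ := hP
  obtain ⟨g, hg, h, hh, rfl⟩ := hp
  obtain ⟨g', hg', h', hh', rfl⟩ := hq
  have hassoc : ∀ (x y z : Matrix (Fin 2) (Fin 2) (F2 Fq)), x * y * z = x * (y * z) :=
    fun x y z => mul_assoc x y z
  have hrep : (g * eta2 Fq i 0 * h) * (g' * eta1 Fq k l * h')
      = g * (eta2 Fq i 0 * (h * g') * eta1 Fq k l) * h' := by
    simp only [hassoc]
  rw [hrep] at hC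
  obtain ⟨hv10, hv00, hv01⟩ := prod_facts hi hl hg (iwahori_mul hh hg') hh'
  simp only [Set.mem_iUnion, Set.mem_union] at hC
  obtain ⟨m, hm | hm⟩ := hC
  · obtain ⟨h1, h2⟩ := eta1_coset_facts hm hl
    obtain ⟨hx10ne, hx10v⟩ := hv10
    obtain ⟨hx00ne, hx00v⟩ := h1
    rcases h2 with h2 | h2; · exact hx10ne h2
    rcases hv00 with h3 | h3; · exact hx00ne h3
    rw [hx10v] at h2
    rw [hx00v] at h3
    simp only [lexlt, lexle] at h2 h3
    omega
  · obtain ⟨h1, h2⟩ := eta2_coset_facts hm hl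
    obtain ⟨hx10ne, hx10v⟩ := hv10
    obtain ⟨hx01ne, hx01v⟩ := h1
    rcases h2 with h2 | h2; · exact hx10ne h2
    rcases hv01 with h3 | h3; · exact hx01ne h3
    rw [hx10v] at h2
    rw [hx01v] at h3
    simp only [lexlt, lexle] at h2 h3
    omega
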